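/- (Parseval/duality relation for the hyperplane Radon transform) For f a Schwartz function on ℝⁿ and φ a continuous compactly supported function on the space of hyperplanes parametrized by Sⁿ⁻¹ × ℝ with φ(−u,−s) = φ(u,s), one has ∫_{Sⁿ⁻¹×ℝ} f̂(u,s) φ(u,s) du ds = ∫_{ℝⁿ} f(x) φ∨(x) dx, where φ∨(x) = ∫_{Sⁿ⁻¹} φ(u, ⟨x,u⟩) du is the dual Radon transform. -/

import Mathlib

open MeasureTheory
open scoped RealInnerProductSpace

/-- The hyperplane Radon transform `f̂(u,s) = ∫_{⟪x,u⟫=s} f dσ`. -/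
noncomputable def radonTransform {n : ℕ} (f : EuclideanSpace ℝ (Fin n) → ℂ)
    (u : EuclideanSpace ℝ (Fin n)) (s : ℝ) : ℂ :=
  ∫ v : ((ℝ ∙ u)ᗮ : Submodule ℝ (EuclideanSpace ℝ (Fin n))), f (s • u + (v : EuclideanSpace ℝ (Fin n)))

/-- The dual Radon transform `φ∨(x) = ∫_{Sⁿ⁻¹} φ(u, ⟪x,u⟫) du`, averaging `φ` over all
hyperplanes through `x`, with `du` the rotation-invariant (surface) measure on the sphere. -/
noncomputable def dualRadonTransform {n : ℕ} (φ : EuclideanSpace ℝ (Fin n) × ℝ → ℂ)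
    (x : EuclideanSpace ℝ (Fin n)) : ℂ :=
  ∫ u : Metric.sphere (0 : EuclideanSpace ℝ (Fin n)) 1,
    φ ((u : EuclideanSpace ℝ (Fin n)), (⟪x, (u : EuclideanSpace ℝ (Fin n))⟫ : ℝ))
      ∂((volume : Measure (EuclideanSpace ℝ (Fin n))).toSphere)

/-!
For a unit vector `u`, the splitting `x = s • u + v` with `v ⟂ u` is a linear isometry
`ℝ × (ℝ ∙ u)ᗮ ≃ ℝⁿ` (for the `L²` product), so it preserves Lebesgue measure. By Fubini along
this splitting, `∫ f̂(u, s) φ(u, s) ds = ∫ f(x) φ(u, ⟪x, u⟫) dx`. Integrating over `u` and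
swapping the integrals, which is legitimate because `φ` is bounded and `f` integrable, gives
`∫ f φ∨`.
-/

section OrthogonalSplitting

variable {E : Type*} [NormedAddCommGroup E] [InnerProductSpace ℝ E] {u : E}

theorem inner_smul_add_orthogonal (hu : ‖u‖ = 1) (s : ℝ) (v : (ℝ ∙ u)ᗮ) :
    ⟪s • u + v, u⟫ = s := by
  rw [inner_add_left, real_inner_smul_left, real_inner_self_eq_norm_sq, hu,
    Submodule.inner_left_of_mem_orthogonal (Submodule.mem_span_singleton_self u) v.2]
  ring

noncomputable def smulAddOrthogonalIsometry (u : E) (hu : ‖u‖ = 1) :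
    WithLp 2 (ℝ × (ℝ ∙ u)ᗮ) ≃ₗᵢ[ℝ] E :=
  (LinearIsometryEquiv.withLpProdCongr 2 (LinearIsometryEquiv.toSpanUnitSingleton u hu)
    (LinearIsometryEquiv.refl ℝ _)).trans (ℝ ∙ u).orthogonalDecomposition.symm

noncomputable def smulAddOrthogonalEquiv (u : E) (hu : ‖u‖ = 1) : (ℝ × (ℝ ∙ u)ᗮ) ≃L[ℝ] E :=
  (WithLp.prodContinuousLinearEquiv 2 ℝ ℝ (ℝ ∙ u)ᗮ).symm.trans
    (smulAddOrthogonalIsometry u hu).toContinuousLinearEquiv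

@[simp]
theorem smulAddOrthogonalEquiv_apply (hu : ‖u‖ = 1) (p : ℝ × (ℝ ∙ u)ᗮ) :
    smulAddOrthogonalEquiv u hu p = p.1 • u + p.2 := by
  simp [smulAddOrthogonalEquiv, smulAddOrthogonalIsometry]

variable [FiniteDimensional ℝ E] [MeasurableSpace E] [BorelSpace E]

theorem measurePreserving_smulAddOrthogonalEquiv (hu : ‖u‖ = 1) :
    MeasurePreserving (smulAddOrthogonalEquiv u hu) (volume.prod volume) volume :=
  (smulAddOrthogonalIsometry u hu).measurePreserving.comp
    (WithLp.volume_preserving_toLp ℝ (ℝ ∙ u)ᗮ)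

theorem integral_eq_integral_integral_smul_add_orthogonal {F : Type*} [NormedAddCommGroup F]
    [NormedSpace ℝ F] (hu : ‖u‖ = 1) {g : E → F} (hg : Integrable g) :
    ∫ x, g x = ∫ s : ℝ, ∫ v : (ℝ ∙ u)ᗮ, g (s • u + v) := by
  have hmp := measurePreserving_smulAddOrthogonalEquiv hu
  have hemb := (smulAddOrthogonalEquiv u hu).toHomeomorph.measurableEmbedding
  have hint : Integrable (fun p => g (smulAddOrthogonalEquiv u hu p)) (volume.prod volume) :=
    (hmp.integrable_comp_emb hemb).mpr hg
  rw [← hmp.integral_comp hemb, integral_prod _ hint]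
  simp

end OrthogonalSplitting

theorem integral_radonTransform_mul {n : ℕ} {f : EuclideanSpace ℝ (Fin n) → ℂ}
    {u : EuclideanSpace ℝ (Fin n)} (hu : ‖u‖ = 1) {ψ : ℝ → ℂ}
    (hf : Integrable fun x => f x * ψ ⟪x, u⟫) :
    ∫ s, radonTransform f u s * ψ s = ∫ x, f x * ψ ⟪x, u⟫ := by
  rw [integral_eq_integral_integral_smul_add_orthogonal hu hf]
  simp only [inner_smul_add_orthogonal hu, radonTransform, integral_mul_const]

theorem radon_parseval_general {n : ℕ} (f : SchwartzMap (EuclideanSpace ℝ (Fin n)) ℂ)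
    (φ : EuclideanSpace ℝ (Fin n) × ℝ → ℂ) (hφcont : Continuous φ)
    (hφsupp : HasCompactSupport φ) :
    (∫ u : Metric.sphere (0 : EuclideanSpace ℝ (Fin n)) 1, ∫ s : ℝ,
        radonTransform (fun x => f x) (u : EuclideanSpace ℝ (Fin n)) s *
          φ ((u : EuclideanSpace ℝ (Fin n)), s)
        ∂(volume) ∂((volume : Measure (EuclideanSpace ℝ (Fin n))).toSphere)) =
      ∫ x : EuclideanSpace ℝ (Fin n), f x * dualRadonTransform φ x := by
  obtain ⟨C, hC⟩ := hφcont.bounded_above_of_compact_support hφsupp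
  have hslice (u : Metric.sphere (0 : EuclideanSpace ℝ (Fin n)) 1) :=
    integral_radonTransform_mul (f := fun x => f x) (ψ := fun s => φ (u, s))
      (mem_sphere_zero_iff_norm.mp u.2)
      (f.integrable.mul_bdd (by fun_prop) (ae_of_all _ fun _ => hC _))
  have hint : Integrable
      (Function.uncurry fun (u : Metric.sphere (0 : EuclideanSpace ℝ (Fin n)) 1)
        (x : EuclideanSpace ℝ (Fin n)) => f x * φ (u, ⟪x, u⟫))
      ((volume : Measure (EuclideanSpace ℝ (Fin n))).toSphere.prod volume) :=
    (f.integrable.comp_snd _).mul_bdd (by fun_prop) (ae_of_all _ fun _ => hC _)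
  simp_rw [hslice]
  rw [integral_integral_swap hint]
  simp_rw [dualRadonTransform, integral_const_mul]

/-- **Parseval/duality relation for the hyperplane Radon transform**:
`∫_{Sⁿ⁻¹×ℝ} f̂(u,s) φ(u,s) du ds = ∫_{ℝⁿ} f(x) φ∨(x) dx` for a Schwartz function `f` and a
continuous compactly supported `φ` on `Sⁿ⁻¹ × ℝ` satisfying `φ(−u,−s) = φ(u,s)`. -/
theorem radon_parseval {n : ℕ} (f : SchwartzMap (EuclideanSpace ℝ (Fin n)) ℂ)
    (φ : EuclideanSpace ℝ (Fin n) × ℝ → ℂ) (hφcont : Continuous φ)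
    (hφsupp : HasCompactSupport φ)
    (hφeven : ∀ (u : EuclideanSpace ℝ (Fin n)) (s : ℝ), φ (-u, -s) = φ (u, s)) :
    (∫ u : Metric.sphere (0 : EuclideanSpace ℝ (Fin n)) 1, ∫ s : ℝ,
        radonTransform (fun x => f x) (u : EuclideanSpace ℝ (Fin n)) s *
          φ ((u : EuclideanSpace ℝ (Fin n)), s)
        ∂(volume) ∂((volume : Measure (EuclideanSpace ℝ (Fin n))).toSphere)) =
      ∫ x : EuclideanSpace ℝ (Fin n), f x * dualRadonTransform φ x :=
  radon_parseval_general f φ hφcont hφsupp
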